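/- Let f be a transcendental entire function, let k > 1 and let r > 1 be such that M(s^j) ≥ M(s)^j for all s ≥ r and all j > 1, and such that M(r) > r^9 and δ(r) < min{1/(2π), (k−1)/4}. If m(s) > 1 for all s ∈ (r^{1+δ(r)}, r^{k−δ(r)}), then log m(s) ≥ (1 − 2πδ(r)) log M(s) > 0 for all s ∈ [r^{1+2δ(r)}, r^{k−2δ(r)}]. -/

import Mathlib

open Set Metric Filter Real

/-- `f` is a transcendental entire function: entire and not a polynomial. -/
def TranscendentalEntire (f : ℂ → ℂ) : Prop :=
  Differentiable ℂ f ∧ ¬ ∃ p : Polynomial ℂ, ∀ z, f z = p.eval z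

/-- The maximum modulus `M(r) = max_{|z| = r} |f z|`. -/
noncomputable def maxMod (f : ℂ → ℂ) (r : ℝ) : ℝ :=
  sSup ((fun z => ‖f z‖) '' Metric.sphere (0 : ℂ) r)

/-- The minimum modulus `m(r) = min_{|z| = r} |f z|`. -/
noncomputable def minMod (f : ℂ → ℂ) (r : ℝ) : ℝ :=
  sInf ((fun z => ‖f z‖) '' Metric.sphere (0 : ℂ) r)

/-- `δ(r) = 1 / √(log r)`. -/
noncomputable def del (r : ℝ) : ℝ := 1 / Real.sqrt (Real.log r)

/-!
Pull `f` back by `exp`. If `|f(z₀)| = M(s)` with `|z₀| = s`, then on the disc of radius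
`R = √(log r) = δ(r) log r` about `log z₀` the modulus of `f ∘ exp` stays in the annulus where
`m > 1`, so `f ∘ exp` has a holomorphic logarithm `g` there with `Re g = log |f ∘ exp| > 0`.
A minimum point of `|f|` on `|z| = s` is `exp` of a point at distance `≤ π` from `log z₀`, so
Harnack's inequality for the positive harmonic function `Re g` gives
`log m(s) ≥ (R - π)/(R + π) · log M(s) ≥ (1 - 2πδ(r)) log M(s)`.
Harnack's inequality is the Schwarz lemma applied to the Cayley transform
`(g - g(c)) / (g + conj (g c))`, which maps the disc into the unit disc.
-/

open ComplexConjugate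

namespace Complex

theorem norm_sub_div_add_conj_lt_one {z a : ℂ} (hz : 0 < z.re) (ha : 0 < a.re) :
    ‖(z - a) / (z + conj a)‖ < 1 := by
  have hlt : normSq (z - a) < normSq (z + conj a) := by
    simp only [normSq_apply, sub_re, sub_im, add_re, add_im, conj_re, conj_im]
    nlinarith [mul_pos hz ha]
  rw [norm_div, div_lt_one (by simpa using (normSq_nonneg _).trans_lt hlt)]
  simpa [normSq_eq_norm_sq, sq_lt_sq, abs_norm] using hlt

theorem le_re_add_mul_conj_div_one_sub {a q : ℂ} (ha : 0 ≤ a.re) (hq : ‖q‖ < 1) :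
    a.re * ((1 - ‖q‖) / (1 + ‖q‖)) ≤ ((a + q * conj a) / (1 - q)).re := by
  have hq₁ : 1 - q ≠ 0 := fun h => by simp [(sub_eq_zero.mp h).symm] at hq
  have hre : ((a + q * conj a) / (1 - q)).re = a.re * (1 - ‖q‖ ^ 2) / ‖1 - q‖ ^ 2 := by
    rw [div_re, ← normSq_eq_norm_sq, ← normSq_eq_norm_sq]
    simp only [normSq_apply, add_re, add_im, mul_re, mul_im, conj_re, conj_im, sub_re, sub_im,
      one_re, one_im]
    ring
  have hpos : 0 < ‖1 - q‖ := norm_pos_iff.mpr hq₁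
  have hle : ‖1 - q‖ ≤ 1 + ‖q‖ := (norm_sub_le _ _).trans_eq (by rw [norm_one])
  have hx : 0 ≤ 1 - ‖q‖ ^ 2 := by nlinarith [norm_nonneg q]
  calc a.re * ((1 - ‖q‖) / (1 + ‖q‖)) = a.re * ((1 - ‖q‖ ^ 2) / (1 + ‖q‖) ^ 2) := by
        congr 1; field_simp; ring
    _ ≤ a.re * ((1 - ‖q‖ ^ 2) / ‖1 - q‖ ^ 2) := by gcongr
    _ = _ := by rw [hre, mul_div_assoc]

theorem harnack_le_re {g : ℂ → ℂ} {c w : ℂ} {R : ℝ} (hg : DifferentiableOn ℂ g (ball c R))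
    (hg₀ : ∀ z ∈ ball c R, 0 < (g z).re) (hw : w ∈ ball c R) :
    (R - dist w c) / (R + dist w c) * (g c).re ≤ (g w).re := by
  have hR : 0 < R := pos_of_mem_ball hw
  set a := g c
  have ha : 0 < a.re := hg₀ c (mem_ball_self hR)
  have hden : ∀ z ∈ ball c R, g z + conj a ≠ 0 := fun z hz h => by
    have := congrArg re h
    simp only [add_re, conj_re, zero_re] at this
    linarith [hg₀ z hz]
  set φ : ℂ → ℂ := fun z => (g z - a) / (g z + conj a)
  have hφc : φ c = 0 := by simp [φ, a]
  have hφ : MapsTo φ (ball c R) (closedBall (φ c) 1) := fun z hz => by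
    rw [hφc, mem_closedBall_zero_iff]
    exact (norm_sub_div_add_conj_lt_one (hg₀ z hz) ha).le
  have hschwarz : ‖φ w‖ ≤ dist w c / R := by
    have hφd : DifferentiableOn ℂ φ (ball c R) := (hg.sub_const a).div (hg.add_const _) hden
    have := dist_le_div_mul_dist_of_mapsTo_ball hφd hφ hw
    rwa [hφc, dist_zero_right, one_div_mul_eq_div] at this
  have hq : ‖φ w‖ < 1 := hschwarz.trans_lt ((div_lt_one hR).mpr (mem_ball.mp hw))
  have hgw : g w = (a + φ w * conj a) / (1 - φ w) := by
    have hq₁ : 1 - φ w ≠ 0 := fun h => by simp [(sub_eq_zero.mp h).symm] at hq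
    have := hden w hw
    rw [eq_div_iff hq₁]
    simp only [φ]
    field_simp
    ring
  have hmono : (R - dist w c) / (R + dist w c) ≤ (1 - ‖φ w‖) / (1 + ‖φ w‖) := by
    rw [le_div_iff₀ hR] at hschwarz
    rw [div_le_div_iff₀ (by positivity) (by positivity)]
    nlinarith [mem_ball.mp hw]
  calc (R - dist w c) / (R + dist w c) * a.re ≤ a.re * ((1 - ‖φ w‖) / (1 + ‖φ w‖)) := by
        rw [mul_comm]; gcongr
    _ ≤ (g w).re := hgw ▸ le_re_add_mul_conj_div_one_sub ha.le hq

theorem exists_differentiableOn_exp_eq_of_ne_zero {F : ℂ → ℂ} {c : ℂ} {R : ℝ}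
    (hF : DifferentiableOn ℂ F (ball c R)) (hF₀ : ∀ z ∈ ball c R, F z ≠ 0) :
    ∃ g : ℂ → ℂ, DifferentiableOn ℂ g (ball c R) ∧ ∀ z ∈ ball c R, exp (g z) = F z := by
  obtain ⟨h, hh⟩ := ((hF.deriv isOpen_ball).div hF hF₀).isExactOn_ball
  have hh_diff : DifferentiableOn ℂ h (ball c R) := fun z hz =>
    (hh z hz).differentiableAt.differentiableWithinAt
  have hlogDeriv : EqOn (logDeriv F) (logDeriv (exp ∘ h)) (ball c R) := fun z hz => by
    rw [logDeriv_comp differentiableAt_exp (hh z hz).differentiableAt, logDeriv_exp,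
      (hh z hz).deriv, logDeriv_apply, Pi.one_apply, one_mul, Pi.div_apply]
  obtain ⟨a, ha, hFa⟩ := (logDeriv_eqOn_iff hF (differentiable_exp.comp_differentiableOn hh_diff)
    isOpen_ball (convex_ball c R).isPreconnected (fun z _ => exp_ne_zero _) hF₀).mp hlogDeriv
  refine ⟨fun z => h z + log a, hh_diff.add_const _, fun z hz => ?_⟩
  rw [hFa hz, exp_add, exp_log ha, Pi.smul_apply, smul_eq_mul, mul_comm, Function.comp_apply]

theorem exists_exp_eq_dist_log_le_pi {z w : ℂ} (hz : z ≠ 0) (hzw : ‖w‖ = ‖z‖) :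
    ∃ v, exp v = w ∧ dist v (log z) ≤ π := by
  have hw : w ≠ 0 := norm_ne_zero_iff.mp (hzw ▸ norm_ne_zero_iff.mpr hz)
  refine ⟨log z + log (w / z), ?_, ?_⟩
  · rw [exp_add, exp_log hz, exp_log (div_ne_zero hw hz), mul_div_cancel₀ _ hz]
  · have hre : (log (w / z)).re = 0 := by
      rw [log_re, norm_div, hzw, div_self (norm_ne_zero_iff.mpr hz), Real.log_one]
    rw [dist_eq_norm, add_sub_cancel_left, ← re_add_im (log (w / z)), hre, log_im]
    simpa using abs_arg_le_pi (w / z)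

theorem norm_exp_mem_Ioo_of_mem_ball {z u : ℂ} {R : ℝ} (hz : z ≠ 0) (hu : u ∈ ball (log z) R) :
    ‖exp u‖ ∈ Ioo (‖z‖ * Real.exp (-R)) (‖z‖ * Real.exp R) := by
  have hre : |u.re - Real.log ‖z‖| < R := by
    rw [← log_re, ← sub_re]
    exact (abs_re_le_norm _).trans_lt (mem_ball_iff_norm.mp hu)
  rw [abs_lt] at hre
  rw [norm_exp, ← Real.exp_log (norm_pos_iff.mpr hz), ← Real.exp_add, ← Real.exp_add]
  exact ⟨Real.exp_lt_exp.mpr (by linarith), Real.exp_lt_exp.mpr (by linarith)⟩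

end Complex

theorem minMod_le_norm (f : ℂ → ℂ) (z : ℂ) : minMod f ‖z‖ ≤ ‖f z‖ :=
  csInf_le ⟨0, by rintro _ ⟨_, _, rfl⟩; exact norm_nonneg _⟩ ⟨z, by simp, rfl⟩

theorem norm_le_maxMod {f : ℂ → ℂ} (hf : Continuous f) (z : ℂ) : ‖f z‖ ≤ maxMod f ‖z‖ :=
  le_csSup ((isCompact_sphere 0 ‖z‖).image (continuous_norm.comp hf)).bddAbove ⟨z, by simp, rfl⟩

theorem exists_norm_eq_maxMod {f : ℂ → ℂ} (hf : Continuous f) {s : ℝ} (hs : 0 ≤ s) :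
    ∃ z, ‖z‖ = s ∧ ‖f z‖ = maxMod f s := by
  obtain ⟨z, hz, hfz⟩ := ((isCompact_sphere (0 : ℂ) s).image (continuous_norm.comp hf)).sSup_mem
    ((NormedSpace.sphere_nonempty.mpr hs).image _)
  exact ⟨z, by simpa using hz, hfz⟩

theorem exists_norm_eq_minMod {f : ℂ → ℂ} (hf : Continuous f) {s : ℝ} (hs : 0 ≤ s) :
    ∃ z, ‖z‖ = s ∧ ‖f z‖ = minMod f s := by
  obtain ⟨z, hz, hfz⟩ := ((isCompact_sphere (0 : ℂ) s).image (continuous_norm.comp hf)).sInf_mem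
    ((NormedSpace.sphere_nonempty.mpr hs).image _)
  exact ⟨z, by simpa using hz, hfz⟩

theorem minMod_le_maxMod {f : ℂ → ℂ} (hf : Continuous f) {s : ℝ} (hs : 0 ≤ s) :
    minMod f s ≤ maxMod f s := by
  obtain ⟨z, rfl, -⟩ := exists_norm_eq_maxMod hf hs
  exact (minMod_le_norm f z).trans (norm_le_maxMod hf z)

theorem log_maxMod_mul_le_log_minMod {f : ℂ → ℂ} (hf : Differentiable ℂ f) {s R : ℝ}
    (hs : 0 < s) (hR : π < R) (hm : ∀ t ∈ Ioo (s * exp (-R)) (s * exp R), 1 < minMod f t) :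
    (R - π) / (R + π) * log (maxMod f s) ≤ log (minMod f s) := by
  obtain ⟨z, hz, hfz⟩ := exists_norm_eq_maxMod hf.continuous hs.le
  obtain ⟨w, hw, hfw⟩ := exists_norm_eq_minMod hf.continuous hs.le
  have hz₀ : z ≠ 0 := norm_pos_iff.mp (hz ▸ hs)
  obtain ⟨v, hv, hvc⟩ := Complex.exists_exp_eq_dist_log_le_pi hz₀ (hw.trans hz.symm)
  set c := Complex.log z
  have hF : ∀ u ∈ ball c R, 1 < ‖f (Complex.exp u)‖ := fun u hu =>
    (hm _ (hz ▸ Complex.norm_exp_mem_Ioo_of_mem_ball hz₀ hu)).trans_le (minMod_le_norm f _)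
  obtain ⟨g, hg, hgF⟩ := Complex.exists_differentiableOn_exp_eq_of_ne_zero
    (hf.comp Complex.differentiable_exp).differentiableOn
    (fun u hu => norm_pos_iff.mp (one_pos.trans (hF u hu)))
  have hg_re : ∀ u ∈ ball c R, (g u).re = log ‖f (Complex.exp u)‖ := fun u hu => by
    rw [← Real.log_exp (g u).re, ← Complex.norm_exp, hgF u hu, Function.comp_apply]
  have hg₀ : ∀ u ∈ ball c R, 0 < (g u).re := fun u hu => (hg_re u hu).symm ▸ log_pos (hF u hu)
  have hc : c ∈ ball c R := mem_ball_self (pi_pos.trans hR)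
  have hvR : v ∈ ball c R := mem_ball.mpr (hvc.trans_lt hR)
  have hgc : (g c).re = log (maxMod f s) := by rw [hg_re c hc, Complex.exp_log hz₀, hfz]
  have hgv : (g v).re = log (minMod f s) := by rw [hg_re v hvR, hv, hfw]
  have hfrac : (R - π) / (R + π) ≤ (R - dist v c) / (R + dist v c) := by
    rw [div_le_div_iff₀ (by linarith [pi_pos]) (by linarith [dist_nonneg (x := v) (y := c)])]
    nlinarith [dist_nonneg (x := v) (y := c)]
  calc (R - π) / (R + π) * log (maxMod f s)
      ≤ (R - dist v c) / (R + dist v c) * (g c).re :=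
        hgc ▸ mul_le_mul_of_nonneg_right hfrac (hg₀ c hc).le
    _ ≤ log (minMod f s) := hgv ▸ Complex.harnack_le_re hg hg₀ hvR

theorem rpow_del {r : ℝ} (hr : 1 < r) : r ^ del r = exp √(log r) := by
  rw [rpow_def_of_pos (zero_lt_one.trans hr), del, mul_one_div, div_sqrt]

theorem Ioo_mul_exp_sqrt_log_subset {r s a b : ℝ} (hr : 1 < r)
    (hs : s ∈ Icc (r ^ (a + del r)) (r ^ (b - del r))) :
    Ioo (s * exp (-√(log r))) (s * exp √(log r)) ⊆ Ioo (r ^ a) (r ^ b) := by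
  have hr₀ : 0 < r := zero_lt_one.trans hr
  rw [rpow_add hr₀, rpow_sub hr₀, rpow_del hr] at hs
  refine Ioo_subset_Ioo ?_ ?_
  · calc r ^ a = r ^ a * exp √(log r) * exp (-√(log r)) := by
          rw [mul_assoc, ← exp_add, add_neg_cancel, exp_zero, mul_one]
      _ ≤ s * exp (-√(log r)) := by gcongr; exact hs.1
  · calc s * exp √(log r) ≤ r ^ b / exp √(log r) * exp √(log r) := by gcongr; exact hs.2
      _ = r ^ b := div_mul_cancel₀ _ (exp_pos _).ne'

theorem one_sub_two_pi_div_le {R : ℝ} (hR : 0 < R) : 1 - 2 * π / R ≤ (R - π) / (R + π) := by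
  have hexpand : (1 - 2 * π / R) * (R + π) = R - π - 2 * π ^ 2 / R := by
    field_simp
    ring
  rw [le_div_iff₀ (by positivity), hexpand]
  linarith [show 0 < 2 * π ^ 2 / R by positivity]

theorem harnack_min_modulus_estimate_general (f : ℂ → ℂ) (hf : TranscendentalEntire f)
    (k r : ℝ) (hr : 1 < r)
    (hdel : del r < min (1 / (2 * π)) ((k - 1) / 4))
    (hm : ∀ s ∈ Ioo (r ^ (1 + del r)) (r ^ (k - del r)), 1 < minMod f s) :
    ∀ s ∈ Icc (r ^ (1 + 2 * del r)) (r ^ (k - 2 * del r)),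
      (1 - 2 * π * del r) * Real.log (maxMod f s) ≤ Real.log (minMod f s) ∧
      0 < (1 - 2 * π * del r) * Real.log (maxMod f s) := by
  intro s hs
  set R := √(log r)
  have hR : 0 < R := sqrt_pos.mpr (log_pos hr)
  have hδ : 2 * π * del r = 2 * π / R := mul_one_div _ _
  have hπR : 2 * π / R < 1 :=
    hδ ▸ (lt_div_iff₀' (by positivity)).mp (hdel.trans_le (min_le_left _ _))
  have hsub := Ioo_mul_exp_sqrt_log_subset (a := 1 + del r) (b := k - del r) hr
    (by convert hs using 3 <;> ring)
  have hs₀ : 0 < s := (rpow_pos_of_pos (zero_lt_one.trans hr) _).trans_le hs.1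
  have hmin : 1 < minMod f s := hm s <| hsub
    ⟨mul_lt_of_lt_one_right hs₀ (exp_lt_one_iff.mpr (by linarith)),
      lt_mul_of_one_lt_right hs₀ (one_lt_exp_iff.mpr hR)⟩
  have hlogM : 0 < log (maxMod f s) :=
    log_pos (hmin.trans_le (minMod_le_maxMod hf.1.continuous hs₀.le))
  have hharnack := log_maxMod_mul_le_log_minMod hf.1 hs₀
    (by linarith [(div_lt_one hR).mp hπR, pi_pos]) fun t ht => hm t (hsub ht)
  rw [hδ]
  exact ⟨(mul_le_mul_of_nonneg_right (one_sub_two_pi_div_le hR) hlogM.le).trans hharnack,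
    mul_pos (by linarith) hlogM⟩

theorem harnack_min_modulus_estimate (f : ℂ → ℂ) (hf : TranscendentalEntire f)
    (k r : ℝ) (hk : 1 < k) (hr : 1 < r)
    (hconv : ∀ s : ℝ, r ≤ s → ∀ j : ℝ, 1 < j → (maxMod f s) ^ j ≤ maxMod f (s ^ j))
    (hM9 : maxMod f r > r ^ (9 : ℝ))
    (hdel : del r < min (1 / (2 * π)) ((k - 1) / 4))
    (hm : ∀ s ∈ Ioo (r ^ (1 + del r)) (r ^ (k - del r)), 1 < minMod f s) :
    ∀ s ∈ Icc (r ^ (1 + 2 * del r)) (r ^ (k - 2 * del r)),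
      (1 - 2 * π * del r) * Real.log (maxMod f s) ≤ Real.log (minMod f s) ∧
      0 < (1 - 2 * π * del r) * Real.log (maxMod f s) :=
  harnack_min_modulus_estimate_general f hf k r hr hdel hm
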